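/- arXiv:2605.14936 — 3 statements merged into one kernel-verified Lean document; each statement's English description precedes it below -/
import Mathlib

section
/- Gap bound for proximal mappings: let g : ℝ^p → ℝ ∪ {+∞} be a proper convex lower semicontinuous function, let β ∈ ℝ^p, and let f(z;β) = (1/2)‖β − z‖² + g(z), whose unique minimizer is the proximal mapping prox_g(β). Let g*(u) = sup_w ( ⟨u,w⟩ − g(w) ) be the Fenchel conjugate and define the dual function d(u;β) = ⟨u,β⟩ − (1/2)‖u‖² − g*(u). Then for every z ∈ ℝ^p with f(z;β) < ∞ and every u ∈ ℝ^p with g*(u) < ∞: (a) d(u;β) ≤ f(z;β) (weak duality), and (b) ‖z − prox_g(β)‖ ≤ √( 2 ( f(z;β) − d(u;β) ) ). -/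
/-!
Weak duality is the Fenchel–Young inequality `⟪u, β - w⟫ ≤ ½‖u‖² + ½‖β - w‖²` combined with
`⟪u, w⟫ - g w ≤ g*(u)`. For the distance bound, the proximal loss is `1`-strongly convex, so at its
minimizer `prox_g(β)` it grows at least quadratically: `½‖z - prox_g(β)‖² ≤ f(z) - f(prox_g(β))`,
and `f(prox_g(β)) ≥ d(u)` by weak duality.
-/

open scoped RealInnerProductSpace
open Filter Topology

section UniformConvex

variable {E : Type*} [NormedAddCommGroup E] [NormedSpace ℝ E] {s : Set E} {φ : ℝ → ℝ}
  {f : E → ℝ} {x y : E}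

lemma UniformConvexOn.modulus_le_sub_of_isMinOn (hf : UniformConvexOn s φ f) (hx : x ∈ s)
    (hmin : IsMinOn f s x) (hy : y ∈ s) : φ ‖x - y‖ ≤ f y - f x := by
  -- Compare `f x` with `f` at the point `(1 - t) • x + t • y` of the segment, then let `t → 0⁺`.
  have hsegment : ∀ t ∈ Set.Ioo (0 : ℝ) 1, (1 - t) * φ ‖x - y‖ ≤ f y - f x := by
    rintro t ⟨ht₀, ht₁⟩
    have hab : 1 - t + t = 1 := by ring
    have hconv := hf.2 hx hy (by linarith) ht₀.le hab
    have hxle := isMinOn_iff.1 hmin _ (hf.1 hx hy (by linarith) ht₀.le hab)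
    simp only [smul_eq_mul] at hconv
    have hscaled : t * ((1 - t) * φ ‖x - y‖) ≤ t * (f y - f x) := by linarith
    exact le_of_mul_le_mul_left hscaled ht₀
  have hlim : Tendsto (fun t : ℝ ↦ (1 - t) * φ ‖x - y‖) (𝓝[>] 0) (𝓝 (φ ‖x - y‖)) :=
    tendsto_nhdsWithin_of_tendsto_nhds <|
      ((continuous_const.sub continuous_id).mul continuous_const).tendsto' _ _ (by simp)
  exact le_of_tendsto hlim (eventually_of_mem (Ioo_mem_nhdsGT one_pos) hsegment)

end UniformConvex

section Proximal

variable {E : Type*} [NormedAddCommGroup E] [InnerProductSpace ℝ E] {s : Set E} {g : E → ℝ}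

noncomputable def proximalLoss (g : E → ℝ) (β z : E) : ℝ := 1 / 2 * ‖β - z‖ ^ 2 + g z

lemma ConvexOn.strongConvexOn_proximalLoss (hg : ConvexOn ℝ s g) (β : E) :
    StrongConvexOn s 1 (proximalLoss g β) := by
  have hexpand : (fun z ↦ proximalLoss g β z - 1 / 2 * ‖z‖ ^ 2)
      = fun z ↦ (1 / 2 * ‖β‖ ^ 2 - ⟪β, z⟫) + g z := by
    ext z
    rw [proximalLoss, norm_sub_sq_real]
    ring
  rw [strongConvexOn_iff_convex, hexpand]
  exact ((convexOn_const _ hg.1).sub ((innerₛₗ ℝ β).concaveOn hg.1)).add hg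

lemma real_inner_le_half_norm_sq_add_half_norm_sq (x y : E) :
    ⟪x, y⟫ ≤ 1 / 2 * ‖x‖ ^ 2 + 1 / 2 * ‖y‖ ^ 2 := by
  nlinarith [norm_sub_sq_real x y, sq_nonneg ‖x - y‖]

lemma proximal_weak_duality {u β w : E} {c : ℝ}
    (hc : c ∈ upperBounds ((fun w ↦ ⟪u, w⟫ - g w) '' s)) (hw : w ∈ s) :
    ⟪u, β⟫ - 1 / 2 * ‖u‖ ^ 2 - c ≤ proximalLoss g β w := by
  have hconj : ⟪u, w⟫ - g w ≤ c := hc ⟨w, hw, rfl⟩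
  have hyoung := real_inner_le_half_norm_sq_add_half_norm_sq u (β - w)
  rw [inner_sub_right] at hyoung
  rw [proximalLoss]
  linarith

end Proximal

theorem proximal_gap_bound_general (p : ℕ)
    (S : Set (EuclideanSpace ℝ (Fin p)))
    (g : EuclideanSpace ℝ (Fin p) → ℝ)
    (hgconv : ConvexOn ℝ S g)
    (β proxβ : EuclideanSpace ℝ (Fin p)) (hproxS : proxβ ∈ S)
    (hproxmin : ∀ z ∈ S,
      (1 / 2) * ‖β - proxβ‖ ^ 2 + g proxβ ≤ (1 / 2) * ‖β - z‖ ^ 2 + g z)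
    (u : EuclideanSpace ℝ (Fin p)) (gstar : ℝ)
    (hgstar : IsLUB ((fun w => ⟪u, w⟫ - g w) '' S) gstar) :
    ∀ z ∈ S,
      (⟪u, β⟫ - (1 / 2) * ‖u‖ ^ 2 - gstar ≤ (1 / 2) * ‖β - z‖ ^ 2 + g z) ∧
      ‖z - proxβ‖ ≤ Real.sqrt (2 *
        (((1 / 2) * ‖β - z‖ ^ 2 + g z) - (⟪u, β⟫ - (1 / 2) * ‖u‖ ^ 2 - gstar))) := by
  intro z hz
  have hdual_z := proximal_weak_duality (β := β) hgstar.1 hz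
  have hdual_prox := proximal_weak_duality (β := β) hgstar.1 hproxS
  have hgrowth := (hgconv.strongConvexOn_proximalLoss β).modulus_le_sub_of_isMinOn hproxS
    (isMinOn_iff.2 hproxmin) hz
  rw [norm_sub_rev] at hgrowth
  refine ⟨hdual_z, Real.le_sqrt_of_sq_le ?_⟩
  simp only [proximalLoss] at hdual_z hdual_prox hgrowth
  linarith

/-- **Gap bound for proximal mappings.**
A proper convex lower semicontinuous `g : ℝ^p → ℝ ∪ {+∞}` is modelled by a real-valued
convex lower-semicontinuous function `g` on its (nonempty, hence proper) effective domain
`S = {w : g(w) < ∞}`.  For `β ∈ ℝ^p`, the proximal loss is `f(z;β) = (1/2)‖β − z‖² + g(z)`,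
and its unique minimizer is the proximal mapping `prox_g(β)`.  The Fenchel conjugate at `u`
is `g*(u) = sup_w (⟪u,w⟫ − g(w))`; the hypothesis that `g*(u) < ∞` is encoded by the
existence of a real least upper bound `gstar` of `{⟪u,w⟫ − g(w) : w ∈ S}`.  Then for every
`z` with `f(z;β) < ∞` (i.e. `z ∈ S`):
(a) weak duality `d(u;β) = ⟪u,β⟫ − (1/2)‖u‖² − g*(u) ≤ f(z;β)`, and
(b) `‖z − prox_g(β)‖ ≤ √(2 (f(z;β) − d(u;β)))`. -/
theorem proximal_gap_bound (p : ℕ)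
    (S : Set (EuclideanSpace ℝ (Fin p))) (hSne : S.Nonempty)
    (g : EuclideanSpace ℝ (Fin p) → ℝ)
    (hgconv : ConvexOn ℝ S g)
    (hglsc : LowerSemicontinuousOn g S)
    (β proxβ : EuclideanSpace ℝ (Fin p)) (hproxS : proxβ ∈ S)
    (hproxmin : ∀ z ∈ S,
      (1 / 2) * ‖β - proxβ‖ ^ 2 + g proxβ ≤ (1 / 2) * ‖β - z‖ ^ 2 + g z)
    (hproxuniq : ∀ z ∈ S,
      (1 / 2) * ‖β - z‖ ^ 2 + g z ≤ (1 / 2) * ‖β - proxβ‖ ^ 2 + g proxβ → z = proxβ)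
    (u : EuclideanSpace ℝ (Fin p)) (gstar : ℝ)
    (hgstar : IsLUB ((fun w => ⟪u, w⟫ - g w) '' S) gstar) :
    ∀ z ∈ S,
      (⟪u, β⟫ - (1 / 2) * ‖u‖ ^ 2 - gstar ≤ (1 / 2) * ‖β - z‖ ^ 2 + g z) ∧
      ‖z - proxβ‖ ≤ Real.sqrt (2 *
        (((1 / 2) * ‖β - z‖ ^ 2 + g z) - (⟪u, β⟫ - (1 / 2) * ‖u‖ ^ 2 - gstar))) :=
  proximal_gap_bound_general p S g hgconv β proxβ hproxS hproxmin u gstar hgstar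
end

section
/- Power-law tail of the marginal gap-shrinkage prior (Supplement Lemma): let α > 0 and λ > 0, and for θ ∈ ℝ with θ ≠ 0 define I(θ) = ∫_{−λ}^{λ} exp( −α(λ − |u|)|θ| ) · ( 1 + (θ + u)² )^{−1} du. Then I(θ) ≥ 2( 1 − exp(−αλ|θ|) ) / ( α|θ| ( 1 + (|θ| + λ)² ) ). Consequently, there exist constants C > 0 and M > 0 such that I(θ) ≥ C |θ|^{−3} whenever |θ| ≥ M; in particular, the marginal density of the gap-shrinkage prior with Cauchy base kernel has a power-law (at least cubic) tail rather than an exponentially decaying one. -/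
/-- The marginal integral `I(θ) = ∫_{−λ}^{λ} exp(−α(λ−|u|)|θ|) (1 + (θ+u)²)⁻¹ du`
appearing in the marginal density of the ℓ1 gap-shrinkage prior with Cauchy base kernel. -/
noncomputable def gapShrinkageMarginal (α l θ : ℝ) : ℝ :=
  ∫ u in (-l)..l, Real.exp (-(α * (l - |u|) * |θ|)) * (1 + (θ + u) ^ 2)⁻¹

/-!
On `[-λ, λ]` the Cauchy factor is at least `(1 + (|θ| + λ)²)⁻¹`, and the exponential weight
integrates exactly to `2(1 - exp(-αλ|θ|)) / (α|θ|)`; this gives the lower bound. For `|θ| ≥ 1`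
the numerator is at least `1 - exp(-αλ)` and `1 + (|θ| + λ)² ≤ (1 + (1 + λ)²) θ²`, so the bound
decays only like `|θ|⁻³`.
-/

open Real intervalIntegral

theorem intervalIntegral.integral_neg_to_self_eq_two_mul_of_even {f : ℝ → ℝ} (hf : Continuous f)
    (heven : ∀ x, f (-x) = f x) (l : ℝ) :
    ∫ x in -l..l, f x = 2 * ∫ x in 0..l, f x := by
  have hreflect : ∫ x in -l..0, f x = ∫ x in 0..l, f x := by
    simpa [heven] using (integral_comp_neg (a := 0) (b := l) f).symm
  rw [← integral_add_adjacent_intervals (hf.intervalIntegrable _ 0) (hf.intervalIntegrable 0 _),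
    hreflect, two_mul]

theorem integral_exp_neg_mul_sub_abs {c : ℝ} (hc : c ≠ 0) {l : ℝ} (hl : 0 ≤ l) :
    ∫ u in -l..l, exp (-(c * (l - |u|))) = 2 * (1 - exp (-(c * l))) / c := by
  have heven : ∀ u : ℝ, exp (-(c * (l - |-u|))) = exp (-(c * (l - |u|))) := by simp
  rw [integral_neg_to_self_eq_two_mul_of_even (by fun_prop) heven]
  have hderiv : ∀ u ∈ Set.uIcc 0 l,
      HasDerivAt (fun u => exp (c * (u - l)) / c) (exp (-(c * (l - |u|)))) u := by
    intro u hu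
    rw [Set.uIcc_of_le hl] at hu
    have hlin : HasDerivAt (fun u => c * (u - l)) c u := by
      simpa using ((hasDerivAt_id u).sub_const l).const_mul c
    rw [abs_of_nonneg hu.1, show -(c * (l - u)) = c * (u - l) by ring]
    simpa [hc] using hlin.exp.div_const c
  rw [integral_eq_sub_of_hasDerivAt hderiv ((by fun_prop : Continuous _).intervalIntegrable _ _)]
  simp only [sub_self, mul_zero, exp_zero, zero_sub, mul_neg]
  ring

theorem inv_one_add_sq_abs_add_le {θ u l : ℝ} (hu : |u| ≤ l) :
    (1 + (|θ| + l) ^ 2)⁻¹ ≤ (1 + (θ + u) ^ 2)⁻¹ := by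
  have hle : |θ + u| ≤ |θ| + l := (abs_add_le θ u).trans (by linarith)
  have hsq : (θ + u) ^ 2 ≤ (|θ| + l) ^ 2 := sq_le_sq.mpr (hle.trans (le_abs_self _))
  gcongr

theorem one_add_sq_add_le_mul_sq {l t : ℝ} (hl : 0 ≤ l) (ht : 1 ≤ t) :
    1 + (t + l) ^ 2 ≤ (1 + (1 + l) ^ 2) * t ^ 2 := by
  have hsum : t + l ≤ (1 + l) * t := by nlinarith
  have hone : (1 : ℝ) ≤ t ^ 2 := one_le_pow₀ ht
  nlinarith [pow_le_pow_left₀ (by linarith) hsum 2]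

theorem inv_one_add_sq_mul_integral_exp_le_gapShrinkageMarginal (α θ : ℝ) {l : ℝ}
    (hl : 0 ≤ l) :
    (1 + (|θ| + l) ^ 2)⁻¹ * ∫ u in -l..l, exp (-(α * (l - |u|) * |θ|)) ≤
      gapShrinkageMarginal α l θ := by
  rw [← integral_const_mul]
  have hcauchy : Continuous fun u => (1 + (θ + u) ^ 2)⁻¹ :=
    (by fun_prop : Continuous fun u => 1 + (θ + u) ^ 2).inv₀ fun u => by positivity
  refine integral_mono_on (by linarith) ((by fun_prop : Continuous _).intervalIntegrable _ _)
    (((by fun_prop : Continuous _).mul hcauchy).intervalIntegrable _ _) fun u hu => ?_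
  rw [mul_comm]
  exact mul_le_mul_of_nonneg_left (inv_one_add_sq_abs_add_le (abs_le.mpr hu)) (exp_nonneg _)

theorem le_gapShrinkageMarginal {α θ : ℝ} (hα : α ≠ 0) (hθ : θ ≠ 0) {l : ℝ} (hl : 0 ≤ l) :
    2 * (1 - exp (-(α * l * |θ|))) / (α * |θ| * (1 + (|θ| + l) ^ 2)) ≤
      gapShrinkageMarginal α l θ := by
  have hweight := integral_exp_neg_mul_sub_abs (mul_ne_zero hα (abs_ne_zero.mpr hθ)) hl
  simp_rw [← mul_right_comm α _ |θ|] at hweight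
  have hbound := inv_one_add_sq_mul_integral_exp_le_gapShrinkageMarginal α θ hl
  rwa [hweight, inv_mul_eq_div, div_div] at hbound

/-- **Power-law tail of the marginal gap-shrinkage prior (Supplement Lemma).**
Let `α > 0` and `λ > 0`, and for `θ ≠ 0` let
`I(θ) = ∫_{−λ}^{λ} exp(−α(λ−|u|)|θ|) (1 + (θ+u)²)⁻¹ du`.  Then
`I(θ) ≥ 2(1 − exp(−αλ|θ|)) / (α|θ|(1 + (|θ|+λ)²))`.
Consequently there exist constants `C > 0` and `M > 0` such that `I(θ) ≥ C |θ|⁻³` whenever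
`|θ| ≥ M`; i.e. the marginal density of the gap-shrinkage prior with Cauchy base kernel has
a power-law (at least cubic) tail rather than an exponentially decaying one. -/
theorem gap_shrinkage_marginal_power_tail (α l : ℝ) (hα : 0 < α) (hl : 0 < l) :
    (∀ θ : ℝ, θ ≠ 0 →
      2 * (1 - Real.exp (-(α * l * |θ|))) / (α * |θ| * (1 + (|θ| + l) ^ 2)) ≤
        gapShrinkageMarginal α l θ) ∧
    (∃ C > 0, ∃ M > 0, ∀ θ : ℝ, M ≤ |θ| →
      C / |θ| ^ 3 ≤ gapShrinkageMarginal α l θ) := by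
  refine ⟨fun θ hθ => le_gapShrinkageMarginal hα.ne' hθ hl.le, ?_⟩
  have hmass : 0 < 1 - exp (-(α * l)) :=
    sub_pos.mpr (exp_lt_one_iff.mpr (neg_lt_zero.mpr (mul_pos hα hl)))
  refine ⟨2 * (1 - exp (-(α * l))) / (α * (1 + (1 + l) ^ 2)), by positivity, 1, one_pos,
    fun θ hθ => le_trans ?_ (le_gapShrinkageMarginal hα.ne' (abs_pos.mp (by linarith)) hl.le)⟩
  have hmass_le : 1 - exp (-(α * l)) ≤ 1 - exp (-(α * l * |θ|)) := by
    have : α * l ≤ α * l * |θ| := le_mul_of_one_le_right (by positivity) hθ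
    gcongr
  calc 2 * (1 - exp (-(α * l))) / (α * (1 + (1 + l) ^ 2)) / |θ| ^ 3
      = 2 * (1 - exp (-(α * l))) / (α * |θ| * ((1 + (1 + l) ^ 2) * |θ| ^ 2)) := by
        field_simp
    _ ≤ 2 * (1 - exp (-(α * l * |θ|))) / (α * |θ| * (1 + (|θ| + l) ^ 2)) := by
        gcongr
        · linarith
        · exact one_add_sq_add_le_mul_sq hl.le hθ
end

section
/- Contraction rate of the relaxed posterior (Theorem 6): let ρ be a metric on Θ ⊆ ℝ^p, θ₀ ∈ Θ, T : ℝ^p → Θ measurable, ε_n → 0, and let Π_n(· | Y_{1:n}) be the relaxed posterior on (θ,u,β). Assume: (a) for every sufficiently large M > 0, Π_n( { G(θ,u,β) > M ε_n² } | Y_{1:n} ) → 0 in P_{θ₀}^n-probability; (b) the primal loss z ↦ f(z;β) is μ-strongly convex with minimizer T(β) and satisfies the gap bound ‖θ − T(β)‖ ≤ √( (2/μ) G(θ,u,β) ) for all (θ,u,β); (c) for every sufficiently large M > 0, the β-marginal of Π_n satisfies Π_n( { ρ(T(β),θ₀) > M ε_n } | Y_{1:n} ) → 0 in P_{θ₀}^n-probability;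 and (d) there is a constant C > 0 with ρ(θ,θ₀) ≤ C‖θ − T(β)‖ + ρ(T(β),θ₀) for all (θ,β). Then for every sufficiently large M > 0, Π_n( { ρ(θ,θ₀) > M ε_n } | Y_{1:n} ) → 0 in P_{θ₀}^n-probability. -/
open MeasureTheory Filter
open scoped ENNReal

/-- The law `P_θ^n` of `n` i.i.d. observations from the density `f` with respect to the
dominating measure `μ`. -/
noncomputable def iidLaw {𝒴 : Type*} [MeasurableSpace 𝒴] (μ : Measure 𝒴)
    (f : 𝒴 → ℝ) (n : ℕ) : Measure (Fin n → 𝒴) :=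
  Measure.pi fun _ => μ.withDensity fun y => ENNReal.ofReal (f y)

/-- The log-likelihood `ℓ_n(θ) = Σ_{i=1}^n log p_θ(Y_i)`. -/
noncomputable def logLik {Θt 𝒴 : Type*} (pdf : Θt → 𝒴 → ℝ) (n : ℕ) (θ : Θt)
    (y : Fin n → 𝒴) : ℝ :=
  ∑ i, Real.log (pdf θ (y i))

/-- The relaxed (gap-shrinkage) posterior
`Π_n(A | Y_{1:n}) = (∫_A e^{ℓ_n(θ)} e^{−α G(θ,u,β)} dΠ₀) / (∫ e^{ℓ_n(θ)} e^{−α G} dΠ₀)`. -/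
noncomputable def relaxedPosterior {Θt Ut Bt 𝒴 : Type*}
    [MeasurableSpace Θt] [MeasurableSpace Ut] [MeasurableSpace Bt]
    (P0 : Measure (Θt × Ut × Bt)) (pdf : Θt → 𝒴 → ℝ) (G : Θt × Ut × Bt → ℝ)
    (a : ℝ) (n : ℕ) (A : Set (Θt × Ut × Bt)) (y : Fin n → 𝒴) : ℝ :=
  (∫ x in A, Real.exp (logLik pdf n x.1 y) * Real.exp (-(a * G x)) ∂P0) /
  (∫ x, Real.exp (logLik pdf n x.1 y) * Real.exp (-(a * G x)) ∂P0)

/-! If `ρ(θ,θ₀) > M ε_n`, the triangle-type inequality forces either a projection error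
`ρ(T(β),θ₀) > (M/2) ε_n` or a relaxation error `‖θ − T(β)‖ > M ε_n / (2C)`; by the gap bound the
latter means `G > μ M² ε_n² / (8C²)`. The posterior is subadditive, so the mass of the bad set is
at most the sum of two masses that vanish in probability by (a) and (c), once `M` is large enough
that `M/2` and `μ M² / (8C²)` exceed the thresholds of (c) and (a). -/

open Set

theorem setIntegral_union_le {α : Type*} [MeasurableSpace α] {ν : Measure α} {g : α → ℝ}
    (hg : 0 ≤ g) (hint : Integrable g ν) (B C : Set α) :
    ∫ x in B ∪ C, g x ∂ν ≤ (∫ x in B, g x ∂ν) + ∫ x in C, g x ∂ν := by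
  rw [← integral_add_measure hint.integrableOn hint.integrableOn]
  exact integral_mono_measure (Measure.restrict_union_le B C) (.of_forall hg)
    (Integrable.add_measure hint.integrableOn hint.integrableOn)

theorem setIntegral_le_add_of_subset_union {α : Type*} [MeasurableSpace α] {ν : Measure α}
    {g : α → ℝ} (hg : 0 ≤ g) (hint : Integrable g ν) {A B C : Set α} (h : A ⊆ B ∪ C) :
    ∫ x in A, g x ∂ν ≤ (∫ x in B, g x ∂ν) + ∫ x in C, g x ∂ν :=
  (setIntegral_mono_set hint.integrableOn (.of_forall hg) (.of_forall h)).trans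
    (setIntegral_union_le hg hint B C)

theorem relaxedPosterior_le_add_of_subset_union {Θt Ut Bt 𝒴 : Type*}
    [MeasurableSpace Θt] [MeasurableSpace Ut] [MeasurableSpace Bt]
    (P0 : Measure (Θt × Ut × Bt)) (pdf : Θt → 𝒴 → ℝ) (G : Θt × Ut × Bt → ℝ)
    (a : ℝ) (n : ℕ) {A B C : Set (Θt × Ut × Bt)} (h : A ⊆ B ∪ C) (y : Fin n → 𝒴) :
    relaxedPosterior P0 pdf G a n A y ≤
      relaxedPosterior P0 pdf G a n B y + relaxedPosterior P0 pdf G a n C y := by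
  set g : Θt × Ut × Bt → ℝ := fun x => Real.exp (logLik pdf n x.1 y) * Real.exp (-(a * G x))
  have hg : 0 ≤ g := fun x => by positivity
  unfold relaxedPosterior
  rw [← add_div]
  by_cases hint : Integrable g P0
  · exact div_le_div_of_nonneg_right (setIntegral_le_add_of_subset_union hg hint h)
      (integral_nonneg hg)
  · simp [g, integral_undef hint]

theorem half_lt_or_lt_of_le_mul_add_of_le_sqrt {r s d g μ C M e : ℝ} (hμ : 0 < μ) (hC : 0 < C)
    (hM : 0 ≤ M) (he : 0 ≤ e) (hr : M * e < r) (htri : r ≤ C * d + s)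
    (hd : d ≤ Real.sqrt (2 / μ * g)) :
    M / 2 * e < s ∨ μ * M ^ 2 / (8 * C ^ 2) * e ^ 2 < g := by
  refine (lt_or_ge (M / 2 * e) s).imp_right fun hs => ?_
  have hd_lower : M * e / (2 * C) < d := by
    rw [div_lt_iff₀ (by positivity)]
    linarith
  have hsq : (M * e / (2 * C)) ^ 2 < 2 / μ * g :=
    (Real.lt_sqrt (by positivity)).mp (hd_lower.trans_le hd)
  calc μ * M ^ 2 / (8 * C ^ 2) * e ^ 2 = μ / 2 * (M * e / (2 * C)) ^ 2 := by
        field_simp; ring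
    _ < μ / 2 * (2 / μ * g) := by gcongr
    _ = g := by field_simp

theorem tendsto_measure_lt_zero_of_le_add {Ω : ℕ → Type*} [∀ n, MeasurableSpace (Ω n)]
    (P : ∀ n, Measure (Ω n)) {X Y Z : ∀ n, Ω n → ℝ} (hZ : ∀ n ω, Z n ω ≤ X n ω + Y n ω)
    {δ : ℝ} (hX : Tendsto (fun n => P n {ω | δ / 2 < X n ω}) atTop (nhds 0))
    (hY : Tendsto (fun n => P n {ω | δ / 2 < Y n ω}) atTop (nhds 0)) :
    Tendsto (fun n => P n {ω | δ < Z n ω}) atTop (nhds 0) := by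
  have hsub : ∀ n, {ω | δ < Z n ω} ⊆ {ω | δ / 2 < X n ω} ∪ {ω | δ / 2 < Y n ω} :=
    fun n ω (hω : δ < Z n ω) => by
      by_contra hω'
      simp only [mem_union, mem_ofPred_eq, not_or, not_lt] at hω'
      linarith [hZ n ω]
  exact tendsto_of_tendsto_of_tendsto_of_le_of_le tendsto_const_nhds
    (by simpa using hX.add hY) (fun n => zero_le)
    fun n => (measure_mono (hsub n)).trans (measure_union_le _ _)

theorem relaxed_posterior_contraction_rate_general
    (p : ℕ) (𝒴 U : Type*) [MeasurableSpace 𝒴] [MeasurableSpace U]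
    (μ : Measure 𝒴)
    (pdf : EuclideanSpace ℝ (Fin p) → 𝒴 → ℝ)
    (θ₀ : EuclideanSpace ℝ (Fin p))
    (ρ : EuclideanSpace ℝ (Fin p) → EuclideanSpace ℝ (Fin p) → ℝ)
    (P0 : Measure (EuclideanSpace ℝ (Fin p) × U × EuclideanSpace ℝ (Fin p)))
    (G : EuclideanSpace ℝ (Fin p) × U × EuclideanSpace ℝ (Fin p) → ℝ)
    (T : EuclideanSpace ℝ (Fin p) → EuclideanSpace ℝ (Fin p))
    (α ε : ℕ → ℝ)
    (hε_pos : ∀ n, 0 < ε n)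
    -- (a) posterior contraction of the duality gap
    (hgap_contract : ∃ Ma : ℝ, 0 < Ma ∧ ∀ M, Ma ≤ M → ∀ δ > 0,
      Tendsto (fun n : ℕ =>
          iidLaw μ (pdf θ₀) n
            {y | δ < relaxedPosterior P0 pdf G (α n) n {x | M * ε n ^ 2 < G x} y})
        atTop (nhds 0))
    -- (b) strong convexity of the primal loss, minimized at T(β), and the gap bound
    (μc : ℝ) (hμc : 0 < μc)
    (hgap_bound : ∀ x : EuclideanSpace ℝ (Fin p) × U × EuclideanSpace ℝ (Fin p),
      ‖x.1 - T x.2.2‖ ≤ Real.sqrt (2 / μc * G x))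
    -- (c) contraction of the β-marginal projection error
    (hproj_contract : ∃ Mc : ℝ, 0 < Mc ∧ ∀ M, Mc ≤ M → ∀ δ > 0,
      Tendsto (fun n : ℕ =>
          iidLaw μ (pdf θ₀) n
            {y | δ < relaxedPosterior P0 pdf G (α n) n
                {x | M * ε n < ρ (T x.2.2) θ₀} y})
        atTop (nhds 0))
    -- (d) triangle-type inequality
    (Cρ : ℝ) (hCρ : 0 < Cρ)
    (htri : ∀ (θ β : EuclideanSpace ℝ (Fin p)),
      ρ θ θ₀ ≤ Cρ * ‖θ - T β‖ + ρ (T β) θ₀) :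
    ∃ M₀ : ℝ, 0 < M₀ ∧ ∀ M, M₀ ≤ M → ∀ δ > 0,
      Tendsto (fun n : ℕ =>
          iidLaw μ (pdf θ₀) n
            {y | δ < relaxedPosterior P0 pdf G (α n) n {x | M * ε n < ρ x.1 θ₀} y})
        atTop (nhds 0) := by
  obtain ⟨Ma, hMa, hgap⟩ := hgap_contract
  obtain ⟨Mc, hMc, hproj⟩ := hproj_contract
  refine ⟨max (2 * Mc) (Real.sqrt (8 * Ma * Cρ ^ 2 / μc)), lt_max_of_lt_left (by positivity),
    fun M hM δ hδ => ?_⟩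
  have hM_proj : Mc ≤ M / 2 := by linarith [(le_max_left _ _).trans hM]
  have hM_pos : 0 < M := by linarith
  have hM_gap : Ma ≤ μc * M ^ 2 / (8 * Cρ ^ 2) := by
    have hM_sq := (Real.sqrt_le_left hM_pos.le).mp ((le_max_right _ _).trans hM)
    rw [le_div_iff₀ (by positivity)]
    rw [div_le_iff₀ hμc] at hM_sq
    linarith
  refine tendsto_measure_lt_zero_of_le_add _ (fun n y => relaxedPosterior_le_add_of_subset_union
    P0 pdf G (α n) n (fun x (hx : M * ε n < ρ x.1 θ₀) => ?_) y)
    (hgap _ hM_gap (δ / 2) (by positivity)) (hproj _ hM_proj (δ / 2) (by positivity))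
  exact (half_lt_or_lt_of_le_mul_add_of_le_sqrt hμc hCρ hM_pos.le (hε_pos n).le hx
    (htri x.1 x.2.2) (hgap_bound x)).symm

/-- **Contraction rate of the relaxed posterior (Theorem 6).**
Assume (a) the relaxed posterior mass of `{G > M ε_n²}` tends to `0` in probability for all
sufficiently large `M`; (b) the primal loss `z ↦ f(z;β)` is `μ`-strongly convex with
minimizer `T(β)` and the gap bound `‖θ − T(β)‖ ≤ √((2/μ) G(θ,u,β))` holds for all
`(θ,u,β)`; (c) the `β`-marginal of the relaxed posterior satisfies
`Π_n(ρ(T(β),θ₀) > M ε_n) → 0` in probability for all sufficiently large `M`; and (d)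
`ρ(θ,θ₀) ≤ C‖θ − T(β)‖ + ρ(T(β),θ₀)`.  Then the relaxed posterior mass of
`{ρ(θ,θ₀) > M ε_n}` tends to `0` in `P_{θ₀}^n`-probability for all sufficiently large
`M > 0`. -/
theorem relaxed_posterior_contraction_rate
    (p : ℕ) (𝒴 U : Type*) [MeasurableSpace 𝒴] [MeasurableSpace U]
    (μ : Measure 𝒴) [SigmaFinite μ]
    (pdf : EuclideanSpace ℝ (Fin p) → 𝒴 → ℝ)
    (hpdf_meas : Measurable (Function.uncurry pdf))
    (hpdf_nonneg : ∀ θ y, 0 ≤ pdf θ y)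
    (hpdf_prob : ∀ θ, ∫ y, pdf θ y ∂μ = 1)
    (θ₀ : EuclideanSpace ℝ (Fin p))
    (ρ : EuclideanSpace ℝ (Fin p) → EuclideanSpace ℝ (Fin p) → ℝ)
    (hρ_self : ∀ θ, ρ θ θ = 0)
    (hρ_pos : ∀ θ θ', θ ≠ θ' → 0 < ρ θ θ')
    (hρ_symm : ∀ θ θ', ρ θ θ' = ρ θ' θ)
    (hρ_tri : ∀ θ₁ θ₂ θ₃, ρ θ₁ θ₃ ≤ ρ θ₁ θ₂ + ρ θ₂ θ₃)
    (P0 : Measure (EuclideanSpace ℝ (Fin p) × U × EuclideanSpace ℝ (Fin p)))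
    [IsProbabilityMeasure P0]
    (G : EuclideanSpace ℝ (Fin p) × U × EuclideanSpace ℝ (Fin p) → ℝ)
    (hG_meas : Measurable G) (hG_nonneg : ∀ x, 0 ≤ G x)
    (T : EuclideanSpace ℝ (Fin p) → EuclideanSpace ℝ (Fin p)) (hT_meas : Measurable T)
    (α ε : ℕ → ℝ) (hα_pos : ∀ n, 0 < α n)
    (hε_pos : ∀ n, 0 < ε n) (hε_to_zero : Tendsto ε atTop (nhds 0))
    -- (a) posterior contraction of the duality gap
    (hgap_contract : ∃ Ma : ℝ, 0 < Ma ∧ ∀ M, Ma ≤ M → ∀ δ > 0,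
      Tendsto (fun n : ℕ =>
          iidLaw μ (pdf θ₀) n
            {y | δ < relaxedPosterior P0 pdf G (α n) n {x | M * ε n ^ 2 < G x} y})
        atTop (nhds 0))
    -- (b) strong convexity of the primal loss, minimized at T(β), and the gap bound
    (f : EuclideanSpace ℝ (Fin p) → EuclideanSpace ℝ (Fin p) → ℝ)
    (μc : ℝ) (hμc : 0 < μc)
    (hstrong : ∀ β, StrongConvexOn Set.univ μc (fun z => f z β))
    (hTmin : ∀ β z, f (T β) β ≤ f z β)
    (hgap_bound : ∀ x : EuclideanSpace ℝ (Fin p) × U × EuclideanSpace ℝ (Fin p),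
      ‖x.1 - T x.2.2‖ ≤ Real.sqrt (2 / μc * G x))
    -- (c) contraction of the β-marginal projection error
    (hproj_contract : ∃ Mc : ℝ, 0 < Mc ∧ ∀ M, Mc ≤ M → ∀ δ > 0,
      Tendsto (fun n : ℕ =>
          iidLaw μ (pdf θ₀) n
            {y | δ < relaxedPosterior P0 pdf G (α n) n
                {x | M * ε n < ρ (T x.2.2) θ₀} y})
        atTop (nhds 0))
    -- (d) triangle-type inequality
    (Cρ : ℝ) (hCρ : 0 < Cρ)
    (htri : ∀ (θ β : EuclideanSpace ℝ (Fin p)),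
      ρ θ θ₀ ≤ Cρ * ‖θ - T β‖ + ρ (T β) θ₀) :
    ∃ M₀ : ℝ, 0 < M₀ ∧ ∀ M, M₀ ≤ M → ∀ δ > 0,
      Tendsto (fun n : ℕ =>
          iidLaw μ (pdf θ₀) n
            {y | δ < relaxedPosterior P0 pdf G (α n) n {x | M * ε n < ρ x.1 θ₀} y})
        atTop (nhds 0) :=
  relaxed_posterior_contraction_rate_general p 𝒴 U μ pdf θ₀ ρ P0 G T α ε hε_pos hgap_contract μc hμc
    hgap_bound hproj_contract Cρ hCρ htri
end
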